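/- arXiv:1612.04410 — 4 statements merged into one kernel-verified Lean document; each statement's English description precedes it below -/
import Mathlib

section
/- Let G be a group and let x, y ∈ G be elements of finite order with gcd(|x|,|y|) = 1. If z ∈ Z(G) satisfies xy = yxz, then z = 1; in particular xy = yx. -/
/-- Let `G` be a group and `x, y ∈ G` of finite order with coprime orders.
If `z ∈ Z(G)` satisfies `xy = yxz`, then `z = 1`; in particular `xy = yx`. -/
theorem stmt1 {G : Type*} [Group G] (x y z : G)
    (hx : IsOfFinOrder x) (hy : IsOfFinOrder y)
    (hcop : Nat.Coprime (orderOf x) (orderOf y))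
    (hz : z ∈ Subgroup.center G) (hxyz : x * y = y * x * z) :
    z = 1 ∧ x * y = y * x := by
  have hzc : ∀ g : G, g * z = z * g := fun g => (Subgroup.mem_center_iff.mp hz g)
  have hzx : Commute x z := (hzc x)
  have hzy : Commute y z := (hzc y)
  have h1 : y⁻¹ * x * y = x * z := by
    rw [mul_assoc, hxyz]; group
  have h2 : x * y * x⁻¹ = y * z := by
    rw [hxyz]
    calc y * x * z * x⁻¹ = y * (x * z * x⁻¹) := by group
    _ = y * (z * x * x⁻¹) := by rw [hzx]
    _ = y * z := by group
  have hzx1 : z ^ orderOf x = 1 := by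
    have h1' : y⁻¹ * x * y⁻¹⁻¹ = x * z := by rw [inv_inv]; exact h1
    have := congrArg (· ^ orderOf x) h1'
    rw [conj_pow, hzx.mul_pow, pow_orderOf_eq_one] at this
    simpa using this.symm
  have hzy1 : z ^ orderOf y = 1 := by
    have := congrArg (· ^ orderOf y) h2
    rw [conj_pow, hzy.mul_pow, pow_orderOf_eq_one] at this
    simpa using this.symm
  have hd : orderOf z ∣ Nat.gcd (orderOf x) (orderOf y) :=
    Nat.dvd_gcd (orderOf_dvd_of_pow_eq_one hzx1) (orderOf_dvd_of_pow_eq_one hzy1)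
  rw [hcop] at hd
  have hz1 : z = 1 := orderOf_eq_one_iff.mp (Nat.dvd_one.mp hd)
  exact ⟨hz1, by rw [hxyz, hz1, mul_one]⟩
end

section
/- Let (r_i)_{i≥1} be non-negative integers, almost all zero, with n = Σ_i i·r_i ≥ 3, and suppose it is not the case that r_n = 1 and r_i = 0 for all i ≠ n. Then Σ_i ( i·r_i² − r_i(r_i+1)/2 ) + 2·Σ_{i<j} i·r_i·r_j ≥ n − 1; equivalently, Σ_i ( 2i·r_i² − r_i(r_i+1) ) + 4·Σ_{i<j} i·r_i·r_j ≥ 2(n − 1). -/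
/-- Let `(r_i)_{i≥1}` be non-negative integers, almost all zero, with
`n = Σ_i i·r_i ≥ 3`, and suppose it is not the case that `r_n = 1` and `r_i = 0` for `i ≠ n`.
Then `Σ_i (2i·r_i² − r_i(r_i+1)) + 4·Σ_{i<j} i·r_i·r_j ≥ 2(n − 1)`. -/
theorem stmt7 (r : ℕ → ℕ) (hr0 : r 0 = 0) (hfin : (Function.support r).Finite)
    (n : ℕ) (hn : ∑ᶠ i, i * r i = n) (hn3 : 3 ≤ n)
    (hnonreg : ¬(r n = 1 ∧ ∀ i, i ≠ n → r i = 0)) :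
    2 * (n - 1) ≤ ∑ᶠ i, (2 * i * r i ^ 2 - r i * (r i + 1))
      + 4 * ∑ᶠ i, ∑ᶠ j, (if i < j then i * r i * r j else 0) := by
  classical
  set s := hfin.toFinset with hs
  have hmem : ∀ i ∈ s, 1 ≤ i ∧ 1 ≤ r i := by
    intro i hi
    have hri : r i ≠ 0 := by simpa [hs, Function.mem_support] using hfin.mem_toFinset.mp hi
    refine ⟨?_, Nat.one_le_iff_ne_zero.mpr hri⟩
    rcases Nat.eq_zero_or_pos i with h | h
    · exact absurd (h ▸ hr0) hri
    · exact h
  have hsub : Function.support r ⊆ ↑s := by rw [hfin.coe_toFinset]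
  -- convert the finsums to finset sums over s
  have h1 : ∑ᶠ i, i * r i = ∑ i ∈ s, i * r i := by
    refine finsum_eq_finset_sum_of_support_subset _ ?_
    intro x hx
    apply hsub
    simp only [Function.mem_support] at hx ⊢
    intro h; simp [h] at hx
  have h2 : ∑ᶠ i, (2 * i * r i ^ 2 - r i * (r i + 1))
      = ∑ i ∈ s, (2 * i * r i ^ 2 - r i * (r i + 1)) := by
    refine finsum_eq_finset_sum_of_support_subset _ ?_
    intro x hx
    apply hsub
    simp only [Function.mem_support] at hx ⊢
    intro h; simp [h] at hx
  have h3 : ∑ᶠ i, ∑ᶠ j, (if i < j then i * r i * r j else 0)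
      = ∑ i ∈ s, ∑ j ∈ s, (if i < j then i * r i * r j else 0) := by
    have hin : ∀ i, ∑ᶠ j, (if i < j then i * r i * r j else 0)
        = ∑ j ∈ s, (if i < j then i * r i * r j else 0) := by
      intro i
      refine finsum_eq_finset_sum_of_support_subset _ ?_
      intro x hx
      apply hsub
      simp only [Function.mem_support] at hx ⊢
      intro h; simp [h] at hx
    rw [finsum_congr hin]
    refine finsum_eq_finset_sum_of_support_subset _ ?_
    intro x hx
    apply hsub
    simp only [Function.mem_support] at hx ⊢
    intro h
    refine hx (Finset.sum_eq_zero ?_)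
    intro j hj; simp [h]
  rw [h2, h3]
  rw [h1] at hn
  -- s is nonempty
  have hk1 : 1 ≤ s.card := by
    rcases Finset.eq_empty_or_nonempty s with h | h
    · rw [h] at hn; simp at hn; omega
    · exact Finset.card_pos.mpr h
  -- termwise bound: 2*i*r i ≤ (2*i*r i^2 - r i*(r i+1)) + 2 on s
  have hA : ∀ i ∈ s, 2 * (i * r i) ≤ (2 * i * r i ^ 2 - r i * (r i + 1)) + 2 := by
    intro i hi
    obtain ⟨hi1, hri⟩ := hmem i hi
    have hle : r i * (r i + 1) ≤ 2 * i * r i ^ 2 := by nlinarith [sq_nonneg (r i)]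
    zify [hle]
    nlinarith [mul_nonneg (mul_nonneg (sub_nonneg.mpr (by exact_mod_cast hri : (1:ℤ) ≤ r i))
      (sub_nonneg.mpr (by exact_mod_cast hi1 : (1:ℤ) ≤ i))) (by positivity : (0:ℤ) ≤ (r i : ℤ)),
      mul_nonneg (sub_nonneg.mpr (by exact_mod_cast hri : (1:ℤ) ≤ r i))
        (sub_nonneg.mpr (by exact_mod_cast hri : (1:ℤ) ≤ r i))]
  have H1 : 2 * n ≤ (∑ i ∈ s, (2 * i * r i ^ 2 - r i * (r i + 1))) + 2 * s.card := by
    calc 2 * n = ∑ i ∈ s, 2 * (i * r i) := by rw [← hn, Finset.mul_sum]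
    _ ≤ ∑ i ∈ s, ((2 * i * r i ^ 2 - r i * (r i + 1)) + 2) := Finset.sum_le_sum hA
    _ = (∑ i ∈ s, (2 * i * r i ^ 2 - r i * (r i + 1))) + 2 * s.card := by
        rw [Finset.sum_add_distrib, Finset.sum_const, smul_eq_mul, mul_comm]
  -- cross-term bound
  have H2 : (∑ i ∈ s, ∑ j ∈ s, (if i < j then 1 else 0))
      ≤ ∑ i ∈ s, ∑ j ∈ s, (if i < j then i * r i * r j else 0) := by
    refine Finset.sum_le_sum fun i hi => Finset.sum_le_sum fun j hj => ?_
    obtain ⟨hi1, hri⟩ := hmem i hi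
    obtain ⟨hj1, hrj⟩ := hmem j hj
    split
    · calc 1 = 1 * 1 * 1 := by ring
      _ ≤ i * r i * r j := Nat.mul_le_mul (Nat.mul_le_mul hi1 hri) hrj
    · exact le_rfl
  -- counting pairs: 2 * (∑∑ [i<j]) = card * (card - 1)
  have hswap : ∑ i ∈ s, ∑ j ∈ s, (if j < i then (1:ℕ) else 0)
      = ∑ i ∈ s, ∑ j ∈ s, (if i < j then 1 else 0) := Finset.sum_comm
  have hpair : ∀ i ∈ s, ∑ j ∈ s, ((if i < j then (1:ℕ) else 0) + (if j < i then 1 else 0))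
      = s.card - 1 := by
    intro i hi
    have hcong : ∀ j ∈ s, ((if i < j then (1:ℕ) else 0) + (if j < i then 1 else 0))
        = if j = i then 0 else 1 := by
      intro j _; split_ifs <;> omega
    rw [Finset.sum_congr rfl hcong,
      ← Finset.sum_erase (f := fun x => if x = i then (0:ℕ) else 1) (a := i) s (by simp)]
    rw [Finset.sum_congr rfl (fun j hj => if_neg (Finset.ne_of_mem_erase hj))]
    simp [Finset.card_erase_of_mem hi]
  have H3 : 2 * (∑ i ∈ s, ∑ j ∈ s, (if i < j then (1:ℕ) else 0))
      = s.card * (s.card - 1) := by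
    calc 2 * (∑ i ∈ s, ∑ j ∈ s, (if i < j then (1:ℕ) else 0))
        = (∑ i ∈ s, ∑ j ∈ s, (if i < j then (1:ℕ) else 0))
          + (∑ i ∈ s, ∑ j ∈ s, (if j < i then 1 else 0)) := by rw [hswap]; ring
    _ = ∑ i ∈ s, ∑ j ∈ s, ((if i < j then (1:ℕ) else 0) + (if j < i then 1 else 0)) := by
        rw [← Finset.sum_add_distrib]
        exact Finset.sum_congr rfl fun i _ => (Finset.sum_add_distrib).symm
    _ = ∑ i ∈ s, (s.card - 1) := Finset.sum_congr rfl hpair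
    _ = s.card * (s.card - 1) := by rw [Finset.sum_const, smul_eq_mul]
  have H4 : 2 * s.card ≤ s.card * (s.card - 1) + 2 := by
    rcases s.card with _ | m
    · simp
    · simp only [Nat.succ_sub_one]
      nlinarith [Nat.le_mul_of_pos_left m (by omega : 0 < m + 1)]
  have hg : 2 * (n - 1) + 2 = 2 * n := by omega
  linarith [H1, H2, H3, H4, hk1, hg]
end

section
/- Let (r_i)_{i≥1} be non-negative integers, almost all zero, with r_i even for every even i, and let n = Σ_i i·r_i satisfy n ≥ 3. Then Σ_i (2i − 1)·r_i² + 4·Σ_{i<j} i·r_i·r_j − 2·Σ_i r_i + |{ i : r_i odd }| ≥ 4·⌊n/2⌋. -/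
open Finset

/-- Per-term positivity used in the multi-part case. -/
lemma stmt9_key (i rr S o : ℤ) (hi : 1 ≤ i) (hr : 1 ≤ rr) (hS : rr + 1 ≤ S)
    (ho : 0 ≤ o) (ho1 : rr = 1 → o = 1) :
    0 ≤ (2*i - 3)*rr^2 + 2*S*rr - 2*i*rr - 2*rr + o := by
  rcases eq_or_lt_of_le hr with h1 | h2
  · have hrr : rr = 1 := h1.symm
    have ho' := ho1 hrr
    subst hrr; subst ho'
    ring_nf
    nlinarith
  · have h2 : 2 ≤ rr := h2
    rcases eq_or_lt_of_le hi with hi1 | hi2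
    · have : i = 1 := hi1.symm
      subst this
      nlinarith [mul_nonneg (by linarith : (0:ℤ) ≤ rr) (by linarith : (0:ℤ) ≤ S - rr - 1),
        mul_nonneg (by linarith : (0:ℤ) ≤ rr) (by linarith : (0:ℤ) ≤ rr - 2)]
    · have hi2 : 2 ≤ i := hi2
      nlinarith [mul_nonneg (by linarith : (0:ℤ) ≤ 2*i - 3)
          (mul_nonneg (by linarith : (0:ℤ) ≤ rr) (by linarith : (0:ℤ) ≤ rr - 2)),
        mul_nonneg (by linarith : (0:ℤ) ≤ rr) (by linarith : (0:ℤ) ≤ S - rr - 1),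
        mul_nonneg (by linarith : (0:ℤ) ≤ i - 1) (by linarith : (0:ℤ) ≤ rr),
        mul_nonneg (by linarith : (0:ℤ) ≤ rr) (by linarith : (0:ℤ) ≤ rr - 2)]

/-- Scalar inequality for the single-part case. -/
lemma stmt9_single (j m o p : ℤ) (hj : 1 ≤ j) (hm : 1 ≤ m) (ho : 0 ≤ o) (hp : 0 ≤ p)
    (h1 : m = 1 → (o = 1 ∧ p = 1)) (h2 : j = 1 → 3 ≤ m)
    (h3 : j = 1 → m = 3 → (o = 1 ∧ p = 1)) :
    0 ≤ (2*j - 3)*m^2 + 2*m*m - 2*j*m - 2*m + o + 2*p := by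
  rcases eq_or_lt_of_le hm with hm1 | hm2
  · obtain ⟨ho1, hp1⟩ := h1 hm1.symm
    have hm' : m = 1 := hm1.symm
    subst ho1; subst hp1; subst hm'
    nlinarith
  · have hm2 : 2 ≤ m := hm2
    rcases eq_or_lt_of_le hj with hj1 | hj2
    · have hj1 : j = 1 := hj1.symm
      have hm3 : 3 ≤ m := h2 hj1
      subst hj1
      rcases eq_or_lt_of_le hm3 with hm3' | hm4
      · obtain ⟨ho1, hp1⟩ := h3 rfl hm3'.symm
        subst ho1; subst hp1
        nlinarith
      · have hm4 : 4 ≤ m := hm4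
        nlinarith [mul_nonneg (by linarith : (0:ℤ) ≤ m) (by linarith : (0:ℤ) ≤ m - 4)]
    · have hj2 : 2 ≤ j := hj2
      nlinarith [mul_nonneg (by linarith : (0:ℤ) ≤ m)
        (by nlinarith : (0:ℤ) ≤ (2*j - 1)*m - (2*j + 2))]

/-- Symmetrization identity. -/
lemma stmt9_sq (D : Finset ℕ) (f : ℕ → ℤ) :
    (∑ i ∈ D, f i)^2 = 2 * (∑ i ∈ D, ∑ j ∈ D, if i < j then f i * f j else 0)
      + ∑ i ∈ D, (f i)^2 := by
  have h1 : (∑ i ∈ D, f i)^2 = ∑ i ∈ D, ∑ j ∈ D, f i * f j := by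
    rw [sq, Finset.sum_mul_sum]
  have h3 : ∑ i ∈ D, ∑ j ∈ D, f i * f j =
      (∑ i ∈ D, ∑ j ∈ D, if i < j then f i * f j else 0)
      + (∑ i ∈ D, ∑ j ∈ D, if j < i then f i * f j else 0)
      + (∑ i ∈ D, ∑ j ∈ D, if i = j then f i * f j else 0) := by
    rw [← Finset.sum_add_distrib, ← Finset.sum_add_distrib]
    refine Finset.sum_congr rfl fun i _ => ?_
    rw [← Finset.sum_add_distrib, ← Finset.sum_add_distrib]
    refine Finset.sum_congr rfl fun j _ => ?_
    rcases lt_trichotomy i j with h | h | h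
    · simp [h, h.ne, not_lt_of_gt h]
    · simp [h, lt_irrefl]
    · simp [h, h.ne', not_lt_of_gt h]
  have h4 : (∑ i ∈ D, ∑ j ∈ D, if j < i then f i * f j else 0)
      = ∑ i ∈ D, ∑ j ∈ D, if i < j then f i * f j else 0 := by
    rw [Finset.sum_comm]
    refine Finset.sum_congr rfl fun i _ => Finset.sum_congr rfl fun j _ => ?_
    rcases lt_or_ge i j with h | h
    · simp [h, mul_comm]
    · simp [not_lt_of_ge h]
  have h5 : (∑ i ∈ D, ∑ j ∈ D, if i = j then f i * f j else 0) = ∑ i ∈ D, (f i)^2 := by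
    refine Finset.sum_congr rfl fun i hi => ?_
    rw [Finset.sum_ite_eq D i (fun j => f i * f j), if_pos hi, sq]
  rw [h1, h3, h4, h5]; ring

set_option maxHeartbeats 1000000 in
/-- Let `(r_i)_{i≥1}` be non-negative integers, almost all zero, with `r_i`
even for every even `i`, and let `n = Σ_i i·r_i` satisfy `n ≥ 3`. Then
`Σ_i (2i − 1)·r_i² + 4·Σ_{i<j} i·r_i·r_j − 2·Σ_i r_i + #{i : r_i odd} ≥ 4·⌊n/2⌋`
(stated with the subtracted term moved to the other side). -/
theorem stmt9 (r : ℕ → ℕ) (hr0 : r 0 = 0) (hfin : (Function.support r).Finite)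
    (hparity : ∀ i, Even i → Even (r i))
    (n : ℕ) (hn : ∑ᶠ i, i * r i = n) (hn3 : 3 ≤ n) :
    4 * (n / 2) + 2 * ∑ᶠ i, r i ≤ ∑ᶠ i, (2 * i - 1) * r i ^ 2
      + 4 * ∑ᶠ i, ∑ᶠ j, (if i < j then i * r i * r j else 0)
      + Set.ncard {i : ℕ | Odd (r i)} := by
  classical
  set D : Finset ℕ := hfin.toFinset with hDdef
  have hmem : ∀ i : ℕ, i ∈ D ↔ r i ≠ 0 := fun i => by simp [hDdef]
  have h0D : (0:ℕ) ∉ D := by simp [hmem, hr0]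
  have hge1 : ∀ i ∈ D, 1 ≤ i := fun i hi =>
    Nat.one_le_iff_ne_zero.2 (fun h => h0D (h ▸ hi))
  have hrge1 : ∀ i ∈ D, 1 ≤ r i := fun i hi => Nat.one_le_iff_ne_zero.2 ((hmem i).1 hi)
  have hsub : ∀ g : ℕ → ℕ, (∀ x, r x = 0 → g x = 0) → ∑ᶠ i, g i = ∑ i ∈ D, g i := by
    intro g hg
    refine finsum_eq_finset_sum_of_support_subset _ ?_
    intro x hx
    simp only [Function.mem_support] at hx
    simp only [hDdef, Set.Finite.coe_toFinset, Function.mem_support]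
    intro h; exact hx (hg x h)
  have e1 : ∑ᶠ i, i * r i = ∑ i ∈ D, i * r i := hsub _ (fun x h => by simp [h])
  have e2 : ∑ᶠ i, r i = ∑ i ∈ D, r i := hsub _ (fun x h => h)
  have e3 : ∑ᶠ i, (2 * i - 1) * r i ^ 2 = ∑ i ∈ D, (2 * i - 1) * r i ^ 2 :=
    hsub _ (fun x h => by simp [h])
  have e4in : ∀ i : ℕ, (∑ᶠ j, (if i < j then i * r i * r j else 0))
      = ∑ j ∈ D, (if i < j then i * r i * r j else 0) :=
    fun i => hsub _ (fun x h => by simp [h])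
  have e4 : (∑ᶠ i, ∑ᶠ j, (if i < j then i * r i * r j else 0))
      = ∑ i ∈ D, ∑ j ∈ D, (if i < j then i * r i * r j else 0) := by
    rw [show (fun i => ∑ᶠ j, (if i < j then i * r i * r j else 0))
        = fun i => ∑ j ∈ D, (if i < j then i * r i * r j else 0) from funext e4in]
    exact hsub _ (fun x h => by simp [h])
  have e5 : Set.ncard {i : ℕ | Odd (r i)} = (D.filter fun i => Odd (r i)).card := by
    have he : {i : ℕ | Odd (r i)} = ↑(D.filter fun i => Odd (r i)) := by
      ext i
      simp only [Set.mem_setOf_eq, Finset.coe_filter, hmem, Set.mem_setOf_eq]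
      exact ⟨fun h => ⟨fun h0 => by simp [h0] at h, h⟩, fun h => h.2⟩
    rw [he, Set.ncard_coe_finset]
  rw [e2, e3, e4, e5]
  rw [e1] at hn
  -- notation
  set S : ℤ := ∑ i ∈ D, (r i : ℤ) with hS
  set T : ℤ := ∑ i ∈ D, ∑ j ∈ D, (if i < j then (r i : ℤ) * (r j : ℤ) else 0) with hT
  set P : ℤ := ∑ i ∈ D, ∑ j ∈ D, (if i < j then (i : ℤ) * (r i : ℤ) * (r j : ℤ) else 0) with hP
  set C : ℤ := ((D.filter fun i => Odd (r i)).card : ℤ) with hC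
  have hsq : S^2 = 2*T + ∑ i ∈ D, (r i : ℤ)^2 := stmt9_sq D (fun i => (r i : ℤ))
  have hTP : T ≤ P := by
    refine Finset.sum_le_sum fun i hi => Finset.sum_le_sum fun j hj => ?_
    by_cases h : i < j
    · simp only [if_pos h]
      have h1 : (1:ℤ) ≤ (i:ℤ) := by exact_mod_cast hge1 i hi
      have : (0:ℤ) ≤ (r i : ℤ) * (r j : ℤ) := by positivity
      nlinarith
    · simp [h]
  have hCsum : C = ∑ i ∈ D, (if Odd (r i) then (1:ℤ) else 0) := by
    rw [hC, Finset.sum_boole]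
  -- define the per-index quantity
  set F : ℕ → ℤ := fun i =>
    (2*(i:ℤ) - 3)*(r i : ℤ)^2 + 2*S*(r i : ℤ) - 2*(i:ℤ)*(r i : ℤ) - 2*(r i : ℤ)
      + (if Odd (r i) then (1:ℤ) else 0) with hF
  have hB1 : ∑ i ∈ D, (2*S*(r i : ℤ)) = 2*S^2 := by
    rw [← Finset.mul_sum, ← hS]; ring
  have hB2 : ∑ i ∈ D, (2*(r i : ℤ)^2) = 2*(∑ i ∈ D, (r i : ℤ)^2) := by
    rw [← Finset.mul_sum]
  have hB3 : ∑ i ∈ D, (2*((i:ℤ)*(r i : ℤ))) = 2*(∑ i ∈ D, (i:ℤ)*(r i : ℤ)) := by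
    rw [← Finset.mul_sum]
  have hB4 : ∑ i ∈ D, (2*(r i : ℤ)) = 2*S := by
    rw [← Finset.mul_sum, ← hS]
  have identity : ∑ i ∈ D, F i
      = (∑ i ∈ D, (2*(i:ℤ) - 1)*(r i : ℤ)^2) - 2*(∑ i ∈ D, (r i : ℤ)^2)
        + 2*S^2 - 2*(∑ i ∈ D, (i:ℤ)*(r i : ℤ)) - 2*S + C := by
    rw [hCsum, ← hB4, ← hB1, ← hB2, ← hB3]
    rw [← Finset.sum_sub_distrib, ← Finset.sum_add_distrib, ← Finset.sum_sub_distrib,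
      ← Finset.sum_sub_distrib, ← Finset.sum_add_distrib]
    exact Finset.sum_congr rfl fun i _ => by simp only [hF]; ring
  have hnZ : (n:ℤ) = ∑ i ∈ D, (i:ℤ)*(r i : ℤ) := by
    rw [← hn]; push_cast; rfl
  -- the main positivity
  have main : 0 ≤ (∑ i ∈ D, F i) + 2*((n % 2 : ℕ) : ℤ) := by
    by_cases hsingle : D.card = 1
    · obtain ⟨j, hj⟩ := Finset.card_eq_one.mp hsingle
      have hjD : j ∈ D := by rw [hj]; exact Finset.mem_singleton_self j
      have hj1 : 1 ≤ j := hge1 j hjD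
      have hm1 : 1 ≤ r j := hrge1 j hjD
      have hSj : S = (r j : ℤ) := by rw [hS, hj, Finset.sum_singleton]
      have hnj : n = j * r j := by rw [← hn, hj, Finset.sum_singleton]
      rw [hj, Finset.sum_singleton, hF]
      simp only [hSj]
      refine stmt9_single (j:ℤ) (r j : ℤ) _ _ (by exact_mod_cast hj1) (by exact_mod_cast hm1)
        (by positivity) (by positivity) ?_ ?_ ?_
      · intro hm'
        have hm'' : r j = 1 := by exact_mod_cast hm'
        have hjodd : Odd j := by
          by_contra hc
          have := hparity j (Nat.not_odd_iff_even.mp hc)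
          rw [hm''] at this
          exact Nat.not_even_one this
        have hj2 : j % 2 = 1 := Nat.odd_iff.mp hjodd
        have hmod : n % 2 = 1 := by rw [hnj, hm'']; omega
        rw [hm'', hmod]
        exact ⟨by rw [if_pos odd_one], by norm_num⟩
      · intro hj'
        have hj'' : j = 1 := by exact_mod_cast hj'
        have : n = r j := by rw [hnj, hj'', one_mul]
        have : 3 ≤ r j := by omega
        exact_mod_cast this
      · intro hj' hm'
        have hj'' : j = 1 := by exact_mod_cast hj'
        have hm'' : r j = 3 := by exact_mod_cast hm'
        have hodd : Odd (r j) := by rw [hm'']; decide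
        have hmod : n % 2 = 1 := by rw [hnj, hm'', hj'']
        rw [hmod]
        exact ⟨by rw [if_pos hodd], by norm_num⟩
    · have hne : D.Nonempty := by
        rcases Finset.eq_empty_or_nonempty D with h | h
        · exfalso; rw [h, Finset.sum_empty] at hn; omega
        · exact h
      have hcard2 : 2 ≤ D.card := by
        have := Finset.card_pos.mpr hne
        omega
      have hterm : ∀ i ∈ D, 0 ≤ F i := by
        intro i hi
        obtain ⟨j, hjD, hji⟩ := Finset.exists_mem_ne (s := D) (by omega) i
        have hpair : r i + r j ≤ ∑ k ∈ D, r k := by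
          have hsub' : ({i, j} : Finset ℕ) ⊆ D := by
            intro x hx
            rcases Finset.mem_insert.mp hx with h | h
            · exact h ▸ hi
            · exact (Finset.mem_singleton.mp h) ▸ hjD
          calc r i + r j = ∑ k ∈ ({i, j} : Finset ℕ), r k := by
                rw [Finset.sum_pair (Ne.symm hji)]
            _ ≤ ∑ k ∈ D, r k := Finset.sum_le_sum_of_subset hsub'
        have hSi : (r i : ℤ) + 1 ≤ S := by
          have h1 : 1 ≤ r j := hrge1 j hjD
          have : ((r i + r j : ℕ) : ℤ) ≤ S := by
            rw [hS]; exact_mod_cast Nat.cast_le.mpr hpair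
          push_cast at this
          linarith
        refine stmt9_key (i:ℤ) (r i : ℤ) S _ (by exact_mod_cast hge1 i hi)
          (by exact_mod_cast hrge1 i hi) hSi (by positivity) ?_
        intro h1
        have : r i = 1 := by exact_mod_cast h1
        rw [if_pos (this ▸ odd_one)]
      have hp0 : (0:ℤ) ≤ ((n % 2 : ℕ) : ℤ) := by positivity
      have hsn := Finset.sum_nonneg hterm
      linarith only [hsn, hp0]
  -- cast the goal to ℤ and conclude
  have hAcast : ((∑ i ∈ D, (2 * i - 1) * r i ^ 2 : ℕ) : ℤ)
      = ∑ i ∈ D, (2*(i:ℤ) - 1)*(r i : ℤ)^2 := by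
    push_cast
    refine Finset.sum_congr rfl fun i hi => ?_
    have h1 : (1:ℕ) ≤ 2 * i := by have := hge1 i hi; omega
    rw [Nat.cast_sub h1]
    push_cast
    ring
  have hPcast : ((∑ i ∈ D, ∑ j ∈ D, (if i < j then i * r i * r j else 0) : ℕ) : ℤ) = P := by
    rw [hP]
    push_cast
    rfl
  have hdiv : 4*((n/2 : ℕ):ℤ) = 2*(n:ℤ) - 2*((n % 2 : ℕ):ℤ) := by omega
  have hA2 : ∑ x ∈ D, ((2*x - 1 : ℕ) : ℤ)*(r x : ℤ)^2 = ∑ i ∈ D, (2*(i:ℤ) - 1)*(r i : ℤ)^2 := by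
    refine Finset.sum_congr rfl fun i hi => ?_
    have h1 : (1:ℕ) ≤ 2 * i := by have := hge1 i hi; omega
    rw [Nat.cast_sub h1]
    push_cast
    ring
  have hdiv2 : 4*((n:ℤ)/2) = 2*(n:ℤ) - 2*((n % 2 : ℕ):ℤ) := by
    omega
  rw [← Nat.cast_le (α := ℤ)]
  push_cast
  rw [hA2]
  linarith only [main, identity, hsq, hTP, hnZ, hS, hP, hC, hdiv2]
end

section
/- Let G be a finite group with center Z = Z(G), and let T be an abelian subgroup of G containing Z such that C_{G/Z}(tZ) ≤ T/Z for every t ∈ T \ Z. Then C_G(t) = T for every t ∈ T \ Z; consequently every non-central element g of ⋃_{h∈G} hTh^{-1} has conjugacy class size |g^G| = |G : T|. -/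
/-!
If `x` centralizes `t ∈ T \ Z`, then `xZ` centralizes `tZ`, so `xZ ∈ T/Z` and `x ∈ T` because
`Z ≤ T`; conversely `T` is abelian, so `C_G(t) = T`. A conjugate `g = hth⁻¹` of such `t` is again
non-central and has the same class, whose size is `|G : C_G(t)| = |G : T|`.
-/

namespace Subgroup

variable {G : Type*} [Group G]

theorem centralizer_le_of_centralizer_mk_le {N T : Subgroup G} [N.Normal] (hNT : N ≤ T) {t : G}
    (h : centralizer {(t : G ⧸ N)} ≤ T.map (QuotientGroup.mk' N)) :
    centralizer {t} ≤ T :=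
  calc centralizer {t}
      ≤ ((centralizer {t}).map (QuotientGroup.mk' N)).comap (QuotientGroup.mk' N) :=
        le_comap_map _ _
    _ ≤ (T.map (QuotientGroup.mk' N)).comap (QuotientGroup.mk' N) := by
        refine comap_mono ((map_centralizer_le_centralizer_image _ _).trans ?_)
        rwa [Set.image_singleton]
    _ = T := comap_map_eq_self (by rwa [QuotientGroup.ker_mk'])

theorem centralizer_singleton_eq_of_centralizer_mk_le {N T : Subgroup G} [N.Normal]
    [IsMulCommutative T] (hNT : N ≤ T) {t : G} (ht : t ∈ T)
    (h : centralizer {(t : G ⧸ N)} ≤ T.map (QuotientGroup.mk' N)) :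
    centralizer {t} = T :=
  le_antisymm (centralizer_le_of_centralizer_mk_le hNT h)
    (T.le_centralizer.trans (centralizer_le (Set.singleton_subset_iff.mpr ht)))

end Subgroup

theorem Nat.card_isConj_eq_index_centralizer {G : Type*} [Group G] (g : G) :
    Nat.card {x : G // IsConj g x} = (Subgroup.centralizer {g}).index :=
  calc Nat.card {x : G // IsConj g x}
      = (MulAction.orbit (ConjAct G) g).ncard := by
        rw [← Nat.card_coe_set_eq]
        exact Nat.card_congr (Equiv.subtypeEquivRight fun x => by
          rw [ConjAct.mem_orbit_conjAct, isConj_comm])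
    _ = (MulAction.stabilizer (ConjAct G) g).index := (MulAction.index_stabilizer _ g).symm
    _ = (Subgroup.centralizer {g}).index := by
        rw [Subgroup.centralizer_eq_comap_stabilizer]
        exact (Subgroup.index_comap_of_surjective _ ConjAct.toConjAct.surjective).symm

theorem IsConj.card_isConj_eq {G : Type*} [Group G] {g t : G} (hgt : IsConj g t) :
    Nat.card {x : G // IsConj g x} = Nat.card {x : G // IsConj t x} :=
  Nat.card_congr (Equiv.subtypeEquivRight fun _ => ⟨hgt.symm.trans, hgt.trans⟩)

theorem stmt11_general {G : Type*} [Group G] (T : Subgroup G)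
    (hab : IsMulCommutative T)
    (hZT : Subgroup.center G ≤ T)
    (hCC : ∀ t ∈ T, t ∉ Subgroup.center G →
      Subgroup.centralizer {((t : G) : G ⧸ Subgroup.center G)}
        ≤ T.map (QuotientGroup.mk' (Subgroup.center G))) :
    (∀ t ∈ T, t ∉ Subgroup.center G → Subgroup.centralizer {t} = T) ∧
    (∀ g : G, g ∉ Subgroup.center G → (∃ h : G, ∃ t ∈ T, g = h * t * h⁻¹) →
      Nat.card {x : G // IsConj g x} = T.index) := by
  have hcentralizer : ∀ t ∈ T, t ∉ Subgroup.center G → Subgroup.centralizer {t} = T :=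
    fun t ht htZ => Subgroup.centralizer_singleton_eq_of_centralizer_mk_le hZT ht (hCC t ht htZ)
  refine ⟨hcentralizer, ?_⟩
  rintro _ hg ⟨h, t, ht, rfl⟩
  have htZ : t ∉ Subgroup.center G := fun htZ => hg (Subgroup.instNormalCenter.conj_mem t htZ h)
  have hconj : IsConj (h * t * h⁻¹) t := (isConj_iff.mpr ⟨h, rfl⟩).symm
  rw [hconj.card_isConj_eq, Nat.card_isConj_eq_index_centralizer, hcentralizer t ht htZ]

/-- Let `G` be a finite group with centre `Z`, and `T` an abelian subgroup of
`G` containing `Z` such that `C_{G/Z}(tZ) ≤ T/Z` for every `t ∈ T \ Z`. Then `C_G(t) = T` for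
every `t ∈ T \ Z`; consequently every non-central element `g` of `⋃_{h∈G} hTh⁻¹` has conjugacy
class size `|g^G| = |G : T|`. -/
theorem stmt11 {G : Type*} [Group G] [Finite G] (T : Subgroup G)
    (hab : IsMulCommutative T)
    (hZT : Subgroup.center G ≤ T)
    (hCC : ∀ t ∈ T, t ∉ Subgroup.center G →
      Subgroup.centralizer {((t : G) : G ⧸ Subgroup.center G)}
        ≤ T.map (QuotientGroup.mk' (Subgroup.center G))) :
    (∀ t ∈ T, t ∉ Subgroup.center G → Subgroup.centralizer {t} = T) ∧
    (∀ g : G, g ∉ Subgroup.center G → (∃ h : G, ∃ t ∈ T, g = h * t * h⁻¹) →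
      Nat.card {x : G // IsConj g x} = T.index) :=
  stmt11_general T hab hZT hCC
end
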